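/- Let g be a Lie algebra, σ a 2-cocycle on g, and g⁺, σ⁺ the associated double Lie algebra and cocycle. Let U_{Lie,σ⁺}(g⁺) = T(g⁺)/I_σ, where I_σ is the two-sided ideal generated by x⁺⊗y⁺ − y⁺⊗x⁺ − [x⁺,y⁺]⁺ − σ⁺(x⁺,y⁺)·1 (the Sridharan algebra). Define α' : Sym_σ(g) → U_{Lie,σ⁺}(g⁺) as the algebra morphism extending x ↦ ι(x⁰), and β' as the unique α'-derivation extending x ↦ ι(x¹). Then (U_{Lie,σ⁺}(g⁺), α', β') is a Poisson enveloping algebra of the modified Lie-Poisson algebra (Sym(g), {·,·}_σ). -/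

import Mathlib

/-!
On generators `ι x`, `ι y` the two compatibilities `α' (P a b) = [α' a, β' b]` and
`β' (P a b) = [β' a, β' b]` are exactly the defining relations of the Sridharan algebra for the
pairs `(x⁰, y¹)` and `(x¹, y¹)`. They propagate to all of `S` through the Leibniz rules: in the
second variable the difference of the two sides is an `α'`-derivation, hence vanishes once it
vanishes on generators. Skew-symmetry then moves `β' (P a b) = [β' a, β' b]` to the first
variable, and `α' (P a b) = [α' a, β' b]` is multiplicative in `a` because `[α' a, β' b]`, being
`α' (P a b)`, commutes with the image of `α'`.

Conversely, if `(α, β)` satisfies the same identities, then `x⁰ ↦ α (ι x)`, `x¹ ↦ β (ι x)`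
respects the Sridharan relations, so it factors through `U_{Lie,σ⁺}(g⁺)`; the factorization is
unique since `ι(x⁰) = α' (ι x)` and `ι(x¹) = β' (ι x)` generate the algebra.
-/

/-- Poisson enveloping algebra predicate (bracket given as a plain binary map). -/
structure IsPoissonEnveloping (R : Type*) {A U : Type*} [CommRing R] [CommRing A]
    [Algebra R A] [Ring U] [Algebra R U] (P : A → A → A)
    (α : A →ₐ[R] U) (β : A →ₗ[R] U) : Prop where
  map_lie : ∀ a b : A, β (P a b) = β a * β b - β b * β a
  compat₃ : ∀ a b : A, α (P a b) = α a * β b - β b * α a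
  compat₄ : ∀ a b : A, β (a * b) = α a * β b + α b * β a
  universal : ∀ (U' : Type*) [Ring U'] [Algebra R U']
      (α' : A →ₐ[R] U') (β' : A →ₗ[R] U'),
      (∀ a b : A, β' (P a b) = β' a * β' b - β' b * β' a) →
      (∀ a b : A, α' (P a b) = α' a * β' b - β' b * α' a) →
      (∀ a b : A, β' (a * b) = α' a * β' b + α' b * β' a) →
      ∃! γ : U →ₐ[R] U', (∀ a : A, γ (α a) = α' a) ∧ (∀ a : A, γ (β a) = β' a)

section Sridharan

variable (R : Type u) (g : Type u) [CommRing R] [LieRing g] [LieAlgebra R g]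

/-- The bracket of the double `g⁺ = g⁰ ⊕ g`: writing `x⁺ = (y, z) = y⁰ + z¹`,
`[x₁⁺, x₂⁺]⁺ = [y₁,z₂]⁰ + [z₁,y₂]⁰ + [z₁,z₂]¹`. -/
def doubleBracket (x₁ x₂ : g × g) : g × g :=
  (⁅x₁.1, x₂.2⁆ + ⁅x₁.2, x₂.1⁆, ⁅x₁.2, x₂.2⁆)

/-- The cocycle `σ⁺` of `g⁺`: `σ⁺(x⁰,y⁰) = σ⁺(x¹,y¹) = 0`,
`σ⁺(x⁰,y¹) = σ⁺(x¹,y⁰) = σ(x,y)`. -/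
def doubleCocycle (σ : g →ₗ[R] g →ₗ[R] R) (x₁ x₂ : g × g) : R :=
  σ x₁.1 x₂.2 + σ x₁.2 x₂.1

/-- The relation defining the Sridharan algebra `U_{Lie,σ⁺}(g⁺) = T(g⁺)/I_σ`, where
`I_σ` is the two-sided ideal generated by all
`x⁺⊗y⁺ − y⁺⊗x⁺ − [x⁺,y⁺]⁺ − σ⁺(x⁺,y⁺)·1`. -/
inductive SridharanRel (σ : g →ₗ[R] g →ₗ[R] R) :
    TensorAlgebra R (g × g) → TensorAlgebra R (g × g) → Prop
  | of (x y : g × g) : SridharanRel σ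
      (TensorAlgebra.ι R x * TensorAlgebra.ι R y - TensorAlgebra.ι R y * TensorAlgebra.ι R x
        - TensorAlgebra.ι R (doubleBracket g x y))
      (algebraMap R (TensorAlgebra R (g × g)) (doubleCocycle R g σ x y))

/-- The Sridharan algebra (modified Lie enveloping algebra) `U_{Lie,σ⁺}(g⁺)`. -/
abbrev Sridharan (σ : g →ₗ[R] g →ₗ[R] R) := RingQuot (SridharanRel R g σ)

/-- The canonical map `ι : g⁺ → U_{Lie,σ⁺}(g⁺)`. -/
noncomputable def sridharanι (σ : g →ₗ[R] g →ₗ[R] R) : g × g →ₗ[R] Sridharan R g σ :=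
  (RingQuot.mkAlgHom R (SridharanRel R g σ)).toLinearMap ∘ₗ TensorAlgebra.ι R

end Sridharan

section DerivationAlong

variable {R A U : Type*} [CommRing R] [CommRing A] [Algebra R A] [Ring U] [Algebra R U]

def IsDerivationAlong (α : A →ₐ[R] U) (D : A →ₗ[R] U) : Prop :=
  ∀ a b, D (a * b) = α a * D b + α b * D a

namespace IsDerivationAlong

variable {α : A →ₐ[R] U} {D D' : A →ₗ[R] U}

theorem map_one (hD : IsDerivationAlong α D) : D 1 = 0 := by
  simpa using hD 1 1

theorem map_algebraMap (hD : IsDerivationAlong α D) (r : R) : D (algebraMap R A r) = 0 := by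
  rw [Algebra.algebraMap_eq_smul_one, map_smul, hD.map_one, smul_zero]

theorem sub (hD : IsDerivationAlong α D) (hD' : IsDerivationAlong α D') :
    IsDerivationAlong α (D - D') := fun a b => by
  simp only [LinearMap.sub_apply, hD a b, hD' a b]
  noncomm_ring

theorem comp {V : Type*} [Ring V] [Algebra R V] (hD : IsDerivationAlong α D) (γ : U →ₐ[R] V) :
    IsDerivationAlong (γ.comp α) (γ.toLinearMap ∘ₗ D) := fun a b => by
  simp [hD a b]

theorem commutator_comp {u : U} (hu : ∀ a, Commute u (α a)) (hD : IsDerivationAlong α D) :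
    IsDerivationAlong α ((LinearMap.mulLeft R u - LinearMap.mulRight R u) ∘ₗ D) := fun a b => by
  simp only [LinearMap.comp_apply, LinearMap.sub_apply, LinearMap.mulLeft_apply,
    LinearMap.mulRight_apply, hD a b, mul_add, add_mul, ← mul_assoc, (hu a).eq, (hu b).eq]
  noncomm_ring

theorem eq_zero_of_adjoin_eq_top {s : Set A} (hs : Algebra.adjoin R s = ⊤)
    (hD : IsDerivationAlong α D) (h : ∀ x ∈ s, D x = 0) : D = 0 := by
  ext a
  induction (hs ▸ Algebra.mem_top : a ∈ Algebra.adjoin R s) using Algebra.adjoin_induction with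
  | mem x hx => exact h x hx
  | algebraMap r => exact hD.map_algebraMap r
  | add x y _ _ hx hy => simp [hx, hy]
  | mul x y _ _ hx hy => simp [hD x y, hx, hy]

theorem eq_of_adjoin_eq_top {s : Set A} (hs : Algebra.adjoin R s = ⊤)
    (hD : IsDerivationAlong α (D - D')) (h : Set.EqOn D D' s) : D = D' :=
  sub_eq_zero.mp <| hD.eq_zero_of_adjoin_eq_top hs fun _ hx => sub_eq_zero.mpr (h hx)

end IsDerivationAlong

end DerivationAlong

theorem Algebra.adjoin_range_eq_top_of_existsUnique_lift {R M : Type*} {S : Type u} [CommRing R]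
    [AddCommGroup M] [Module R M] [CommRing S] [Algebra R S] (ι : M →ₗ[R] S)
    (hS : ∀ (B : Type u) [CommRing B] [Algebra R B] (f : M →ₗ[R] B),
      ∃! h : S →ₐ[R] B, ∀ x : M, h (ι x) = f x) :
    Algebra.adjoin R (Set.range ι) = ⊤ := by
  set A := Algebra.adjoin R (Set.range ι)
  obtain ⟨p, hp, -⟩ := hS A (ι.codRestrict A.toSubmodule fun x => Algebra.subset_adjoin ⟨x, rfl⟩)
  obtain ⟨_, -, huniq⟩ := hS S ι
  have hsection : A.val.comp p = AlgHom.id R S :=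
    (huniq _ fun x => congrArg Subtype.val (hp x)).trans (huniq _ fun _ => rfl).symm
  refine Algebra.eq_top_iff.mpr fun s => ?_
  have hps : (p s : S) = s := DFunLike.congr_fun hsection s
  exact hps ▸ (p s).2

section PoissonBracket

variable {R A U : Type*} [CommRing R] [CommRing A] [Algebra R A] [Ring U] [Algebra R U]
  {P : A →ₗ[R] A →ₗ[R] A} {α : A →ₐ[R] U} {β : A →ₗ[R] U} {s : Set A}

theorem isDerivationAlong_comp_bracket (hder₂ : ∀ a b c : A, P a (b * c) = b * P a c + c * P a b)
    (α : A →ₐ[R] U) (a : A) : IsDerivationAlong α (α.toLinearMap ∘ₗ P a) := fun b c => by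
  simp [hder₂]

theorem bracket_algebraMap_left (hder₁ : ∀ a b c : A, P (a * b) c = a * P b c + b * P a c)
    (r : R) (b : A) : P (algebraMap R A r) b = 0 :=
  (Derivation.mk' (P.flip b) fun a c => hder₁ a c b).map_algebraMap r

theorem map_bracket_eq_commutator_of_adjoin_eq_top (hs : Algebra.adjoin R s = ⊤)
    (hder₁ : ∀ a b c : A, P (a * b) c = a * P b c + b * P a c)
    (hder₂ : ∀ a b c : A, P a (b * c) = b * P a c + c * P a b) (hβ : IsDerivationAlong α β)
    (h : ∀ x ∈ s, ∀ y ∈ s, α (P x y) = α x * β y - β y * α x) (a b : A) :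
    α (P a b) = α a * β b - β b * α a := by
  have hcomm : ∀ a b, Commute (α a) (α b) := fun a b => (Commute.all a b).map α
  have generator_left : ∀ x ∈ s, ∀ b, α (P x b) = α x * β b - β b * α x := fun x hx b =>
    LinearMap.congr_fun ((isDerivationAlong_comp_bracket hder₂ α x).sub
      (hβ.commutator_comp (hcomm x)) |>.eq_of_adjoin_eq_top hs fun y hy => h x hx y hy) b
  induction (hs ▸ Algebra.mem_top : a ∈ Algebra.adjoin R s) using Algebra.adjoin_induction with
  | mem x hx => exact generator_left x hx b
  | algebraMap r => simp [bracket_algebraMap_left hder₁, Algebra.commutes]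
  | add x y _ _ hx hy => simp only [map_add, LinearMap.add_apply, hx, hy]; noncomm_ring
  | mul x y _ _ hx hy =>
    -- `α x * β b - β b * α x = α (P x b)` lies in the commutative image of `α`
    have hxy := (hcomm y (P x b)).eq
    rw [hx] at hxy
    rw [hder₁, map_add, map_mul, map_mul, hx, hy, hxy, map_mul]
    noncomm_ring

theorem map_bracket_eq_lie_of_adjoin_eq_top (hs : Algebra.adjoin R s = ⊤)
    (hder₂ : ∀ a b c : A, P a (b * c) = b * P a c + c * P a b) (hP : P.IsAlt)
    (hβ : IsDerivationAlong α β) (hcompat : ∀ a b, α (P a b) = α a * β b - β b * α a)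
    (h : ∀ x ∈ s, ∀ y ∈ s, β (P x y) = β x * β y - β y * β x) (a b : A) :
    β (P a b) = β a * β b - β b * β a := by
  have extend_right : ∀ a, (∀ y ∈ s, β (P a y) = β a * β y - β y * β a) →
      ∀ b, β (P a b) = β a * β b - β b * β a := by
    intro a ha
    have hα : ∀ b, α (P a b) = β a * α b - α b * β a := fun b => by
      rw [← hP.neg, map_neg, hcompat]; noncomm_ring
    -- by `hα`, the two sides differ by an `α`-derivation
    have hdiff : IsDerivationAlong α
        (β ∘ₗ P a - (LinearMap.mulLeft R (β a) - LinearMap.mulRight R (β a)) ∘ₗ β) := fun b c => by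
      simp only [LinearMap.sub_apply, LinearMap.comp_apply, LinearMap.mulLeft_apply,
        LinearMap.mulRight_apply]
      rw [hder₂, map_add, hβ, hβ, hβ b c, hα, hα]
      noncomm_ring
    exact LinearMap.congr_fun (hdiff.eq_of_adjoin_eq_top hs ha)
  refine extend_right a (fun y hy => ?_) b
  rw [← hP.neg, map_neg, extend_right y (h y hy) a]
  noncomm_ring

end PoissonBracket

namespace Sridharan

variable {R g : Type u} [CommRing R] [LieRing g] [LieAlgebra R g] {σ : g →ₗ[R] g →ₗ[R] R}

theorem ι_mul_ι_sub_ι_mul_ι (x y : g × g) :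
    sridharanι R g σ x * sridharanι R g σ y - sridharanι R g σ y * sridharanι R g σ x =
      sridharanι R g σ (doubleBracket g x y) +
        algebraMap R (Sridharan R g σ) (doubleCocycle R g σ x y) := by
  have h := RingQuot.mkAlgHom_rel R (SridharanRel.of (σ := σ) x y)
  simp only [map_sub, map_mul, AlgHom.commutes] at h
  exact sub_eq_iff_eq_add'.mp h

variable {B : Type*} [Ring B] [Algebra R B]

noncomputable def lift (f : g × g →ₗ[R] B)
    (hf : ∀ x y, f x * f y - f y * f x =
      f (doubleBracket g x y) + algebraMap R B (doubleCocycle R g σ x y)) :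
    Sridharan R g σ →ₐ[R] B :=
  RingQuot.liftAlgHom R ⟨TensorAlgebra.lift R f, by rintro _ _ ⟨x, y⟩; simp [hf x y]⟩

@[simp]
theorem lift_ι (f : g × g →ₗ[R] B)
    (hf : ∀ x y, f x * f y - f y * f x =
      f (doubleBracket g x y) + algebraMap R B (doubleCocycle R g σ x y)) (v : g × g) :
    lift f hf (sridharanι R g σ v) = f v := by
  simp [lift, sridharanι]

theorem hom_ext {φ ψ : Sridharan R g σ →ₐ[R] B}
    (h : ∀ v, φ (sridharanι R g σ v) = ψ (sridharanι R g σ v)) : φ = ψ :=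
  RingQuot.ringQuot_ext' R φ ψ (TensorAlgebra.hom_ext (LinearMap.ext h))

end Sridharan

section LiePoisson

variable {R g : Type u} {S : Type*} [CommRing R] [LieRing g] [LieAlgebra R g] [CommRing S]
  [Algebra R S] {ι : g →ₗ[R] S} {P : S →ₗ[R] S →ₗ[R] S} {σ : g →ₗ[R] g →ₗ[R] R}
  {U : Type*} [Ring U] [Algebra R U]

def doubleMap (ι : g →ₗ[R] S) (α : S →ₐ[R] U) (β : S →ₗ[R] U) : g × g →ₗ[R] U :=
  α.toLinearMap ∘ₗ ι ∘ₗ LinearMap.fst R g g + β ∘ₗ ι ∘ₗ LinearMap.snd R g g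

@[simp]
theorem doubleMap_apply (α : S →ₐ[R] U) (β : S →ₗ[R] U) (v : g × g) :
    doubleMap ι α β v = α (ι v.1) + β (ι v.2) :=
  rfl

theorem doubleMap_mul_sub_mul {α : S →ₐ[R] U} {β : S →ₗ[R] U}
    (hgen : ∀ x y : g, P (ι x) (ι y) = ι ⁅x, y⁆ + algebraMap R S (σ x y)) (hP : P.IsAlt)
    (hβ : IsDerivationAlong α β) (hlie : ∀ a b, β (P a b) = β a * β b - β b * β a)
    (hcompat : ∀ a b, α (P a b) = α a * β b - β b * α a) (v w : g × g) :
    doubleMap ι α β v * doubleMap ι α β w - doubleMap ι α β w * doubleMap ι α β v =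
      doubleMap ι α β (doubleBracket g v w) + algebraMap R U (doubleCocycle R g σ v w) := by
  obtain ⟨y₁, z₁⟩ := v
  obtain ⟨y₂, z₂⟩ := w
  have e₁ : α (ι y₁) * β (ι z₂) =
      β (ι z₂) * α (ι y₁) + (α (ι ⁅y₁, z₂⁆) + algebraMap R U (σ y₁ z₂)) := by
    rw [← sub_eq_iff_eq_add', ← hcompat, hgen, map_add, AlgHom.commutes]
  have e₂ : β (ι z₁) * α (ι y₂) =
      α (ι y₂) * β (ι z₁) + (α (ι ⁅z₁, y₂⁆) + algebraMap R U (σ z₁ y₂)) := by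
    rw [← sub_eq_iff_eq_add', ← neg_sub, ← hcompat, ← map_neg, hP.neg, hgen, map_add,
      AlgHom.commutes]
  have e₃ : β (ι z₁) * β (ι z₂) = β (ι z₂) * β (ι z₁) + β (ι ⁅z₁, z₂⁆) := by
    rw [← sub_eq_iff_eq_add', ← hlie, hgen, map_add, hβ.map_algebraMap, add_zero]
  have e₄ : α (ι y₁) * α (ι y₂) = α (ι y₂) * α (ι y₁) := ((Commute.all _ _).map α).eq
  simp only [doubleMap_apply, doubleBracket, doubleCocycle, mul_add, add_mul]
  rw [e₁, e₂, e₃, e₄]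
  simp only [map_add]
  abel

variable {α' : S →ₐ[R] Sridharan R g σ} {β' : S →ₗ[R] Sridharan R g σ}

theorem sridharanι_eq_doubleMap (hα' : ∀ x : g, α' (ι x) = sridharanι R g σ (x, 0))
    (hβ' : ∀ x : g, β' (ι x) = sridharanι R g σ (0, x)) (v : g × g) :
    sridharanι R g σ v = doubleMap ι α' β' v := by
  simp [hα', hβ', ← map_add]

theorem sridharan_map_bracket_ι_eq_commutator
    (hgen : ∀ x y : g, P (ι x) (ι y) = ι ⁅x, y⁆ + algebraMap R S (σ x y))
    (hα' : ∀ x : g, α' (ι x) = sridharanι R g σ (x, 0))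
    (hβ' : ∀ x : g, β' (ι x) = sridharanι R g σ (0, x)) (x y : g) :
    α' (P (ι x) (ι y)) = α' (ι x) * β' (ι y) - β' (ι y) * α' (ι x) := by
  rw [hgen, map_add, AlgHom.commutes, hα', hα', hβ', Sridharan.ι_mul_ι_sub_ι_mul_ι]
  simp [doubleBracket, doubleCocycle]

theorem sridharan_map_bracket_ι_eq_lie
    (hgen : ∀ x y : g, P (ι x) (ι y) = ι ⁅x, y⁆ + algebraMap R S (σ x y))
    (hβ : IsDerivationAlong α' β') (hβ' : ∀ x : g, β' (ι x) = sridharanι R g σ (0, x))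
    (x y : g) : β' (P (ι x) (ι y)) = β' (ι x) * β' (ι y) - β' (ι y) * β' (ι x) := by
  rw [hgen, map_add, hβ.map_algebraMap, add_zero, hβ', hβ', hβ', Sridharan.ι_mul_ι_sub_ι_mul_ι]
  simp [doubleBracket, doubleCocycle]

theorem sridharan_existsUnique_factor (hs : Algebra.adjoin R (Set.range ι) = ⊤)
    (hgen : ∀ x y : g, P (ι x) (ι y) = ι ⁅x, y⁆ + algebraMap R S (σ x y)) (hP : P.IsAlt)
    (hα' : ∀ x : g, α' (ι x) = sridharanι R g σ (x, 0)) (hβ : IsDerivationAlong α' β')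
    (hβ' : ∀ x : g, β' (ι x) = sridharanι R g σ (0, x)) (α : S →ₐ[R] U) (β : S →ₗ[R] U)
    (hlie : ∀ a b, β (P a b) = β a * β b - β b * β a)
    (hcompat : ∀ a b, α (P a b) = α a * β b - β b * α a) (hder : IsDerivationAlong α β) :
    ∃! γ : Sridharan R g σ →ₐ[R] U, (∀ a, γ (α' a) = α a) ∧ ∀ a, γ (β' a) = β a := by
  set γ := Sridharan.lift (doubleMap ι α β) (doubleMap_mul_sub_mul hgen hP hder hlie hcompat)
  have hγι : ∀ v, γ (sridharanι R g σ v) = doubleMap ι α β v := Sridharan.lift_ι _ _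
  have hγα : γ.comp α' = α := AlgHom.ext_of_adjoin_eq_top hs <| by
    rintro _ ⟨x, rfl⟩
    simp [hα', hγι]
  have hγβ : γ.toLinearMap ∘ₗ β' = β :=
    ((hγα ▸ hβ.comp γ).sub hder).eq_of_adjoin_eq_top hs <| by
      rintro _ ⟨x, rfl⟩
      simp [hβ', hγι]
  refine ⟨γ, ⟨AlgHom.congr_fun hγα, LinearMap.congr_fun hγβ⟩, fun γ' ⟨hγ'α, hγ'β⟩ => ?_⟩
  refine Sridharan.hom_ext fun v => ?_
  rw [hγι, sridharanι_eq_doubleMap hα' hβ', doubleMap_apply, map_add, hγ'α, hγ'β]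
  rfl

end LiePoisson

theorem sridharan_is_poisson_enveloping_general
    {R g S : Type u} [CommRing R] [LieRing g] [LieAlgebra R g]
    [CommRing S] [Algebra R S] (ι : g →ₗ[R] S)
    (hS : ∀ (B : Type u) [CommRing B] [Algebra R B] (f : g →ₗ[R] B),
      ∃! h : S →ₐ[R] B, ∀ x : g, h (ι x) = f x)
    (σ : g →ₗ[R] g →ₗ[R] R)
    -- the modified Lie-Poisson bracket on `S`:
    (P : S →ₗ[R] S →ₗ[R] S)
    (hder₁ : ∀ a b c : S, P (a * b) c = a * P b c + b * P a c)
    (hder₂ : ∀ a b c : S, P a (b * c) = b * P a c + c * P a b)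
    (hgen : ∀ x y : g, P (ι x) (ι y) = ι ⁅x, y⁆ + algebraMap R S (σ x y))
    (hPskew : ∀ a : S, P a a = 0)
    -- `α'` is the algebra morphism extending `x ↦ ι(x⁰)`:
    (α' : S →ₐ[R] Sridharan R g σ)
    (hα' : ∀ x : g, α' (ι x) = sridharanι R g σ (x, 0))
    -- `β'` is the `α'`-derivation extending `x ↦ ι(x¹)`:
    (β' : S →ₗ[R] Sridharan R g σ)
    (hβ'der : ∀ a b : S, β' (a * b) = α' a * β' b + α' b * β' a)
    (hβ' : ∀ x : g, β' (ι x) = sridharanι R g σ (0, x)) :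
    IsPoissonEnveloping R (fun a b => P a b) α' β' := by
  have hs := Algebra.adjoin_range_eq_top_of_existsUnique_lift ι hS
  have hβ : IsDerivationAlong α' β' := hβ'der
  have compat := map_bracket_eq_commutator_of_adjoin_eq_top hs hder₁ hder₂ hβ <| by
    rintro _ ⟨x, rfl⟩ _ ⟨y, rfl⟩
    exact sridharan_map_bracket_ι_eq_commutator hgen hα' hβ' x y
  have lie := map_bracket_eq_lie_of_adjoin_eq_top hs hder₂ hPskew hβ compat <| by
    rintro _ ⟨x, rfl⟩ _ ⟨y, rfl⟩
    exact sridharan_map_bracket_ι_eq_lie hgen hβ hβ' x y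
  exact ⟨lie, compat, hβ'der, fun _ _ _ α β hlie hcompat hder =>
    sridharan_existsUnique_factor hs hgen hPskew hα' hβ hβ' α β hlie hcompat hder⟩

/-- Let `g` be a Lie algebra over `R`, `σ` a 2-cocycle on `g`, and
`g⁺, σ⁺` the associated double Lie algebra and cocycle. Let `S` be the symmetric
algebra of `g` (axiomatized by its universal property, structure map `ι`), equipped
with the modified Lie-Poisson bracket `P` extending `{x,y}_σ = [x,y] + σ(x,y)`.
Let `α'` be the algebra morphism `S → U_{Lie,σ⁺}(g⁺)` extending `x ↦ ι(x⁰)` and `β'`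
the unique `α'`-derivation extending `x ↦ ι(x¹)`. Then `(U_{Lie,σ⁺}(g⁺), α', β')` is
a Poisson enveloping algebra of the modified Lie-Poisson algebra `(S, P)`. -/
theorem sridharan_is_poisson_enveloping
    {R g S : Type u} [CommRing R] [LieRing g] [LieAlgebra R g]
    [CommRing S] [Algebra R S] (ι : g →ₗ[R] S)
    (hS : ∀ (B : Type u) [CommRing B] [Algebra R B] (f : g →ₗ[R] B),
      ∃! h : S →ₐ[R] B, ∀ x : g, h (ι x) = f x)
    (σ : g →ₗ[R] g →ₗ[R] R)
    (hσskew : ∀ x y : g, σ x y = - σ y x)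
    (hσcocycle : ∀ x y z : g, σ ⁅x, y⁆ z + σ ⁅y, z⁆ x + σ ⁅z, x⁆ y = 0)
    -- the modified Lie-Poisson bracket on `S`:
    (P : S →ₗ[R] S →ₗ[R] S)
    (hder₁ : ∀ a b c : S, P (a * b) c = a * P b c + b * P a c)
    (hder₂ : ∀ a b c : S, P a (b * c) = b * P a c + c * P a b)
    (hgen : ∀ x y : g, P (ι x) (ι y) = ι ⁅x, y⁆ + algebraMap R S (σ x y))
    (hPskew : ∀ a : S, P a a = 0)
    (hPJac : ∀ a b c : S, P a (P b c) + P b (P c a) + P c (P a b) = 0)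
    -- `α'` is the algebra morphism extending `x ↦ ι(x⁰)`:
    (α' : S →ₐ[R] Sridharan R g σ)
    (hα' : ∀ x : g, α' (ι x) = sridharanι R g σ (x, 0))
    -- `β'` is the `α'`-derivation extending `x ↦ ι(x¹)`:
    (β' : S →ₗ[R] Sridharan R g σ)
    (hβ'der : ∀ a b : S, β' (a * b) = α' a * β' b + α' b * β' a)
    (hβ' : ∀ x : g, β' (ι x) = sridharanι R g σ (0, x)) :
    IsPoissonEnveloping R (fun a b => P a b) α' β' :=
  sridharan_is_poisson_enveloping_general ι hS σ P hder₁ hder₂ hgen hPskew α' hα' β' hβ'der hβ'
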